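/- arXiv:2603.15451 — 4 statements merged into one kernel-verified Lean document; each statement's English description precedes it below -/
import Mathlib

section
/- In the general quantized rational chip-firing model, for every chip configuration D ≥ 0 and every k with 0 ≤ k ≤ n−1, there exists at least one k-stabilization of D, i.e., a k-stable configuration reachable from D by a finite sequence of legal k-firing moves. -/
/-- Number of non-sink neighbors of `i` (in the graph `G` on the `n` non-sink
vertices) lying in `X`. -/
def degIn {n : ℕ} (G : SimpleGraph (Fin n)) [DecidableRel G.Adj]
    (X : Finset (Fin n)) (i : Fin n) : ℕ :=
  (X.filter fun j => G.Adj i j).card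

/-- The quantized cluster-fire move `φ_S` (parameters `a, b, c`): every `i ∈ S`
loses `c + ⌊deg_{Sᶜ}(i)·a/b⌋` chips and every `j ∉ S` gains `⌊deg_S(j)·a/b⌋`. -/
def gfire {n : ℕ} (a b c : ℕ) (G : SimpleGraph (Fin n)) [DecidableRel G.Adj]
    (S : Finset (Fin n)) (D : Fin n → ℤ) : Fin n → ℤ :=
  fun i =>
    if i ∈ S then D i - (c : ℤ) - ((degIn G Sᶜ i * a / b : ℕ) : ℤ)
    else D i + ((degIn G S i * a / b : ℕ) : ℤ)

/-- One legal `k`-firing move: `D ≥ 0`, some nonempty `S` with `|S| ≤ k+1`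
fires, and the result is nonnegative. -/
def gLegalKStep {n : ℕ} (a b c k : ℕ) (G : SimpleGraph (Fin n)) [DecidableRel G.Adj]
    (D D' : Fin n → ℤ) : Prop :=
  (∀ i, 0 ≤ D i) ∧ ∃ S : Finset (Fin n), S.Nonempty ∧ S.card ≤ k + 1 ∧
    D' = gfire a b c G S D ∧ (∀ i, 0 ≤ D' i)

/-- `D` is `k`-stable: `D ≥ 0` and no `k`-firing move is legal on `D`. -/
def gKStable {n : ℕ} (a b c k : ℕ) (G : SimpleGraph (Fin n)) [DecidableRel G.Adj]
    (D : Fin n → ℤ) : Prop :=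
  (∀ i, 0 ≤ D i) ∧ ∀ S : Finset (Fin n), S.Nonempty → S.card ≤ k + 1 →
    ¬ (∀ i, 0 ≤ gfire a b c G S D i)

/-!
Every legal firing strictly lowers the total number of chips. The edges crossing the cut
`(S, Sᶜ)` are the same whether counted from `S` or from `Sᶜ`, so rounding down the inflow on `Sᶜ`
only loses chips, while rounding down the outflow on `S` hides less than one chip per vertex of
`S`, which the `c ≥ 1` chips each vertex of `S` sends to the sink more than pay for. Legal moves
keep configurations nonnegative, so the chip count is a natural-number measure and firing legally
until no move is possible terminates, necessarily in a `k`-stable configuration.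
-/

open Finset

theorem Relation.exists_reflTransGen_forall_not {α : Type*} {r : α → α → Prop}
    (f : α → ℕ) (hf : ∀ x y, r x y → f y < f x) (x : α) :
    ∃ y, Relation.ReflTransGen r x y ∧ ∀ z, ¬ r y z := by
  induction x using (measure f).wf.induction with
  | h x ih =>
    by_cases hx : ∃ y, r x y
    · obtain ⟨y, hxy⟩ := hx
      obtain ⟨z, hyz, hz⟩ := ih y (hf x y hxy)
      exact ⟨z, Relation.ReflTransGen.head hxy hyz, hz⟩
    · exact ⟨x, Relation.ReflTransGen.refl, not_exists.mp hx⟩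

namespace Nat

variable {ι : Type*}

theorem sum_div_le_div_sum (s : Finset ι) (f : ι → ℕ) (b : ℕ) :
    ∑ i ∈ s, f i / b ≤ (∑ i ∈ s, f i) / b := by
  classical
  induction s using Finset.induction_on with
  | empty => simp
  | insert i s hi ih =>
    rw [sum_insert hi, sum_insert hi]
    exact (Nat.add_le_add_left ih _).trans Nat.div_add_div_le_add_div

theorem div_sum_lt_sum_div_add_card {s : Finset ι} (hs : s.Nonempty) (f : ι → ℕ) {b : ℕ}
    (hb : 0 < b) : (∑ i ∈ s, f i) / b < ∑ i ∈ s, f i / b + #s := by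
  rw [Nat.div_lt_iff_lt_mul hb]
  calc ∑ i ∈ s, f i
      < ∑ i ∈ s, (f i / b + 1) * b :=
        sum_lt_sum_of_nonempty hs fun i _ => (Nat.div_lt_iff_lt_mul hb).mp (Nat.lt_succ_self _)
    _ = (∑ i ∈ s, f i / b + #s) * b := by simp [sum_add_distrib, add_mul, sum_mul]

end Nat

section ChipFiring

variable {n a b c : ℕ} {G : SimpleGraph (Fin n)} [DecidableRel G.Adj]

theorem sum_degIn_compl_eq_sum_degIn (S : Finset (Fin n)) :
    ∑ j ∈ Sᶜ, degIn G S j = ∑ i ∈ S, degIn G Sᶜ i := by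
  simp only [degIn, card_filter]
  rw [sum_comm]
  exact sum_congr rfl fun i _ => sum_congr rfl fun j _ => by simp [G.adj_comm]

theorem sum_inflow_lt_sink_loss_add_sum_outflow (hb : 0 < b) (hc : 0 < c)
    {S : Finset (Fin n)} (hS : S.Nonempty) :
    ∑ j ∈ Sᶜ, degIn G S j * a / b < c * #S + ∑ i ∈ S, degIn G Sᶜ i * a / b := by
  have hcross : ∑ j ∈ Sᶜ, degIn G S j * a = ∑ i ∈ S, degIn G Sᶜ i * a := by
    rw [← sum_mul, ← sum_mul, sum_degIn_compl_eq_sum_degIn]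
  calc ∑ j ∈ Sᶜ, degIn G S j * a / b
      ≤ (∑ j ∈ Sᶜ, degIn G S j * a) / b := Nat.sum_div_le_div_sum _ _ _
    _ = (∑ i ∈ S, degIn G Sᶜ i * a) / b := by rw [hcross]
    _ < ∑ i ∈ S, degIn G Sᶜ i * a / b + #S := Nat.div_sum_lt_sum_div_add_card hS _ hb
    _ ≤ c * #S + ∑ i ∈ S, degIn G Sᶜ i * a / b := by
      have := Nat.le_mul_of_pos_left #S hc
      omega

theorem sum_gfire (S : Finset (Fin n)) (D : Fin n → ℤ) :
    ∑ i, gfire a b c G S D i =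
      ∑ i, D i - c * #S - ∑ i ∈ S, ((degIn G Sᶜ i * a / b : ℕ) : ℤ)
        + ∑ j ∈ Sᶜ, ((degIn G S j * a / b : ℕ) : ℤ) := by
  rw [← sum_add_sum_compl S (gfire a b c G S D), ← sum_add_sum_compl S D]
  simp only [gfire]
  rw [sum_ite_of_true (fun _ hi => hi), sum_ite_of_false (fun _ hi => mem_compl.mp hi),
    sum_sub_distrib, sum_sub_distrib, sum_add_distrib, sum_const, nsmul_eq_mul]
  ring

theorem sum_gfire_lt (hb : 0 < b) (hc : 0 < c) {S : Finset (Fin n)}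
    (hS : S.Nonempty) (D : Fin n → ℤ) : ∑ i, gfire a b c G S D i < ∑ i, D i := by
  have key : ∑ j ∈ Sᶜ, ((degIn G S j * a / b : ℕ) : ℤ)
      < c * #S + ∑ i ∈ S, ((degIn G Sᶜ i * a / b : ℕ) : ℤ) := by
    exact_mod_cast sum_inflow_lt_sink_loss_add_sum_outflow hb hc hS
  rw [sum_gfire]
  linarith

theorem gKStable_of_forall_not_gLegalKStep {k : ℕ} {D : Fin n → ℤ} (hD : ∀ i, 0 ≤ D i)
    (h : ∀ D', ¬ gLegalKStep a b c k G D D') : gKStable a b c k G D :=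
  ⟨hD, fun S hS hcard hpos => h _ ⟨hD, S, hS, hcard, rfl, hpos⟩⟩

theorem nonneg_of_reflTransGen_gLegalKStep {k : ℕ} {D D' : Fin n → ℤ} (hD : ∀ i, 0 ≤ D i)
    (h : Relation.ReflTransGen (gLegalKStep a b c k G) D D') : ∀ i, 0 ≤ D' i := by
  induction h with
  | refl => exact hD
  | tail _ hstep _ =>
    obtain ⟨-, -, -, -, -, hpos⟩ := hstep
    exact hpos

theorem gLegalKStep.toNat_sum_lt {k : ℕ} (hb : 0 < b) (hc : 0 < c) {D D' : Fin n → ℤ}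
    (h : gLegalKStep a b c k G D D') :
    (∑ i, D' i).toNat < (∑ i, D i).toNat := by
  obtain ⟨-, S, hS, -, rfl, hpos⟩ := h
  have hlt : ∑ i, gfire a b c G S D i < ∑ i, D i := sum_gfire_lt hb hc hS D
  have h0 : 0 ≤ ∑ i, gfire a b c G S D i := sum_nonneg fun i _ => hpos i
  omega

end ChipFiring

theorem exists_kStabilization_general (n a b c : ℕ) (hb : 0 < b)
    (hc : 0 < c) (G : SimpleGraph (Fin n)) [DecidableRel G.Adj]
    (D : Fin n → ℤ) (hD : ∀ i, 0 ≤ D i) (k : ℕ) :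
    ∃ D' : Fin n → ℤ,
      Relation.ReflTransGen (gLegalKStep a b c k G) D D' ∧ gKStable a b c k G D' := by
  obtain ⟨D', hreach, hfinal⟩ :=
    Relation.exists_reflTransGen_forall_not (r := gLegalKStep a b c k G)
      (fun D => (∑ i, D i).toNat) (fun _ _ h => h.toNat_sum_lt hb hc) D
  exact ⟨D', hreach, gKStable_of_forall_not_gLegalKStep
    (nonneg_of_reflTransGen_gLegalKStep hD hreach) hfinal⟩

/-- every nonnegative configuration has a `k`-stabilization. -/
theorem exists_kStabilization (n a b c : ℕ) (hn : 0 < n) (ha : 0 < a) (hb : 0 < b)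
    (hc : 0 < c) (G : SimpleGraph (Fin n)) [DecidableRel G.Adj]
    (D : Fin n → ℤ) (hD : ∀ i, 0 ≤ D i) (k : ℕ) (hk : k ≤ n - 1) :
    ∃ D' : Fin n → ℤ,
      Relation.ReflTransGen (gLegalKStep a b c k G) D D' ∧ gKStable a b c k G D' :=
  exists_kStabilization_general n a b c hb hc G D hD k
end

section
/- Let a, b be coprime positive integers and fix k with 0 ≤ k < b. For each path P ∈ P(N^b E^a), there is exactly one k-skeletal path Q such that Q = P_v for some lattice point v on P; equivalently, every equivalence class of the cyclic-shift relation ∼ contains exactly one k-skeletal path. -/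
/-! The level of the rotation `P_v` after `n` steps is `lvl(v + n) - lvl(v)`, indices taken
cyclically. Rotating at a point of minimal level gives a Dyck path, so some rotation satisfies
(R1), and a rotation `P_v` is skeletal exactly when `v` has maximal level among the points whose
rotation satisfies (R1). Since `a` and `b` are coprime, the `a + b` points of `P` before its
endpoint have pairwise distinct levels, so this maximum is attained only once. -/

/-- A lattice path is a list of steps, `true` = north step, `false` = east step.
`Q` is a path from `(0,0)` to `(a,b)` iff it has `b` norths and `a` easts. -/
def IsPath (a b : ℕ) (Q : List Bool) : Prop :=
  Q.count true = b ∧ Q.count false = a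

/-- Level `a·y − b·x` of the lattice point reached after the first `m` steps. -/
def lvlAt (a b : ℕ) (Q : List Bool) (m : ℕ) : ℤ :=
  (a : ℤ) * ((Q.take m).count true : ℤ) - (b : ℤ) * ((Q.take m).count false : ℤ)

/-- Condition (R1): the last `k+1` north steps of `Q` start at nonnegative
level (a north step at index `m` is among the last `k+1` norths iff at most `k`
norths occur strictly after it). -/
def R1 (a b k : ℕ) (Q : List Bool) : Prop :=
  ∀ m < Q.length, Q.getD m false = true → (Q.drop (m + 1)).count true ≤ k →
    0 ≤ lvlAt a b Q m

/-- `Q` is an `(a,b)`-Dyck path: every north step starts at nonnegative level. -/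
def IsDyck (a b : ℕ) (Q : List Bool) : Prop :=
  ∀ m < Q.length, Q.getD m false = true → 0 ≤ lvlAt a b Q m

/-- `Q` is `k`-skeletal: (R1) holds, and (R2) every cyclic shift of `Q` at a
lattice point of positive level fails (R1).  (The cyclic shift of `Q` at the
point reached after `m` steps is `Q.rotate m`.) -/
def SkeletalPath (a b k : ℕ) (Q : List Bool) : Prop :=
  R1 a b k Q ∧ ∀ m ≤ Q.length, 0 < lvlAt a b Q m → ¬ R1 a b k (Q.rotate m)

section

variable {a b k : ℕ} {P : List Bool}

def endLevel (a b : ℕ) (l : List Bool) : ℤ :=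
  a * l.count true - b * l.count false

lemma lvlAt_eq_endLevel (Q : List Bool) (m : ℕ) : lvlAt a b Q m = endLevel a b (Q.take m) := rfl

lemma endLevel_append (l₁ l₂ : List Bool) :
    endLevel a b (l₁ ++ l₂) = endLevel a b l₁ + endLevel a b l₂ := by
  simp only [endLevel, List.count_append]; push_cast; ring

lemma IsPath.length_eq (hP : IsPath a b P) : P.length = a + b := by
  rw [← List.count_true_add_count_false, hP.1, hP.2, add_comm]

lemma IsPath.endLevel_eq_zero (hP : IsPath a b P) : endLevel a b P = 0 := by
  simp only [endLevel, hP.1, hP.2]; ring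

lemma lvlAt_eq_of_le_length {Q : List Bool} {m : ℕ} (hm : m ≤ Q.length) :
    lvlAt a b Q m = (a + b) * (Q.take m).count true - b * m := by
  have hcount : ((Q.take m).count true + (Q.take m).count false : ℤ) = m := by
    have := List.count_true_add_count_false (Q.take m)
    rw [List.length_take_of_le hm] at this
    exact_mod_cast this
  simp only [lvlAt]
  linear_combination -(b : ℤ) * hcount

/-- Equal levels force `a + b ∣ b (q - p)`, hence `a + b ∣ q - p` by coprimality, while
`|q - p| < a + b`. -/
lemma IsPath.lvlAt_injOn (hP : IsPath a b P) (hab : a.Coprime b) {p q : ℕ}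
    (hp : p < P.length) (hq : q < P.length) (h : lvlAt a b P p = lvlAt a b P q) : p = q := by
  rw [lvlAt_eq_of_le_length hp.le, lvlAt_eq_of_le_length hq.le] at h
  have hcop : IsCoprime ((a + b : ℕ) : ℤ) (b : ℤ) :=
    Nat.isCoprime_iff_coprime.mpr (Nat.coprime_add_self_left.mpr hab)
  have hdvd : ((a + b : ℕ) : ℤ) ∣ (q - p : ℤ) * b :=
    ⟨(P.take q).count true - (P.take p).count true, by push_cast; linear_combination h⟩
  have hlt : |(q - p : ℤ)| < ((a + b : ℕ) : ℤ) := by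
    rw [← hP.length_eq, abs_lt]; omega
  have := Int.eq_zero_of_abs_lt_dvd (hcop.dvd_of_dvd_mul_right hdvd) hlt
  omega

lemma IsPath.lvlAt_rotate (hP : IsPath a b P) {m n : ℕ} (hm : m < P.length)
    (hn : n ≤ P.length) :
    lvlAt a b (P.rotate m) n = lvlAt a b P ((m + n) % P.length) - lvlAt a b P m := by
  simp only [lvlAt_eq_endLevel, List.rotate_eq_drop_append_take hm.le]
  have hsplit := congrArg (endLevel a b) (List.take_append_drop m P)
  rw [endLevel_append, hP.endLevel_eq_zero] at hsplit
  rcases Nat.lt_or_ge (m + n) P.length with hlt | hge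
  · rw [List.take_append_of_le_length (by simp; omega), Nat.mod_eq_of_lt hlt, List.take_add,
      endLevel_append]
    ring
  · rw [List.take_append, List.take_of_length_le (by simp; omega), List.take_take,
      List.length_drop, endLevel_append,
      show min (n - (P.length - m)) m = (m + n) % P.length by
        rw [Nat.mod_eq_sub_mod hge, Nat.mod_eq_of_lt (by omega)]; omega]
    linear_combination hsplit

lemma rotate_rotate_eq_rotate_mod {α : Type*} (P : List α) (m n : ℕ) :
    (P.rotate m).rotate n = P.rotate ((m + n) % P.length) := by
  rw [List.rotate_rotate, List.rotate_mod]

lemma r1_of_isDyck {Q : List Bool} (hQ : IsDyck a b Q) : R1 a b k Q :=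
  fun m hm hnorth _ => hQ m hm hnorth

lemma IsPath.isDyck_rotate_of_forall_le (hP : IsPath a b P) {m : ℕ} (hm : m < P.length)
    (hmin : ∀ j < P.length, lvlAt a b P m ≤ lvlAt a b P j) : IsDyck a b (P.rotate m) := by
  intro n hn _
  rw [List.length_rotate] at hn
  rw [hP.lvlAt_rotate hm hn.le, sub_nonneg]
  exact hmin _ (Nat.mod_lt _ (by omega))

lemma IsPath.skeletalPath_rotate_iff (hP : IsPath a b P) {m : ℕ} (hm : m < P.length) :
    SkeletalPath a b k (P.rotate m) ↔ R1 a b k (P.rotate m) ∧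
      ∀ j < P.length, R1 a b k (P.rotate j) → lvlAt a b P j ≤ lvlAt a b P m := by
  simp only [SkeletalPath, List.length_rotate]
  refine and_congr_right fun _ => ⟨fun hR2 j hj hR1 => ?_, fun hmax n hn hpos hR1 => ?_⟩
  · by_contra! hlt
    set n := (j + P.length - m) % P.length
    have hmn : (m + n) % P.length = j := by
      rw [Nat.add_mod_mod, show m + (j + P.length - m) = j + P.length by omega,
        Nat.add_mod_right, Nat.mod_eq_of_lt hj]
    have hn : n ≤ P.length := (Nat.mod_lt _ (by omega)).le
    refine hR2 n hn ?_ ?_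
    · rw [hP.lvlAt_rotate hm hn, hmn, sub_pos]; exact hlt
    · rwa [rotate_rotate_eq_rotate_mod, hmn]
  · rw [hP.lvlAt_rotate hm hn, sub_pos] at hpos
    rw [rotate_rotate_eq_rotate_mod] at hR1
    exact (hmax _ (Nat.mod_lt _ (by omega)) hR1).not_gt hpos

lemma IsPath.exists_skeletalPath_rotate (hP : IsPath a b P) (hL : 0 < P.length) :
    ∃ m < P.length, SkeletalPath a b k (P.rotate m) := by
  classical
  obtain ⟨m₀, hm₀, hmin⟩ := (Finset.range P.length).exists_min_image (lvlAt a b P)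
    (Finset.nonempty_range_iff.mpr hL.ne')
  rw [Finset.mem_range] at hm₀
  have hR1 : R1 a b k (P.rotate m₀) := r1_of_isDyck <|
    hP.isDyck_rotate_of_forall_le hm₀ fun j hj => hmin j (Finset.mem_range.mpr hj)
  obtain ⟨M, hM, hmax⟩ := ((Finset.range P.length).filter fun j => R1 a b k (P.rotate j))
    |>.exists_max_image (lvlAt a b P) ⟨m₀, by simpa [hm₀] using hR1⟩
  simp only [Finset.mem_filter, Finset.mem_range] at hM hmax
  exact ⟨M, hM.1, (hP.skeletalPath_rotate_iff hM.1).mpr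
    ⟨hM.2, fun j hj hR1 => hmax j ⟨hj, hR1⟩⟩⟩

lemma IsPath.eq_of_skeletalPath_rotate (hP : IsPath a b P) (hab : a.Coprime b) {m m' : ℕ}
    (hm : m < P.length) (hm' : m' < P.length) (h : SkeletalPath a b k (P.rotate m))
    (h' : SkeletalPath a b k (P.rotate m')) : m = m' := by
  rw [hP.skeletalPath_rotate_iff hm] at h
  rw [hP.skeletalPath_rotate_iff hm'] at h'
  exact hP.lvlAt_injOn hab hm hm' <| le_antisymm (h'.2 m hm h.1) (h.2 m' hm' h'.1)

end

theorem unique_skeletal_shift_general (a b k : ℕ) (hb : 0 < b)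
    (hab : a.Coprime b) :
    ∀ P : List Bool, IsPath a b P →
      ∃! Q : List Bool, (∃ m ≤ P.length, Q = P.rotate m) ∧ SkeletalPath a b k Q := by
  intro P hP
  have hL : 0 < P.length := by rw [hP.length_eq]; omega
  obtain ⟨M, hM, hskel⟩ := hP.exists_skeletalPath_rotate (k := k) hL
  refine ⟨P.rotate M, ⟨⟨M, hM.le, rfl⟩, hskel⟩, ?_⟩
  rintro _ ⟨⟨m, -, rfl⟩, h⟩
  rw [← List.rotate_mod] at h ⊢
  rw [hP.eq_of_skeletalPath_rotate hab (Nat.mod_lt _ hL) hM h hskel]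

/-- every cyclic-shift equivalence class contains exactly one
`k`-skeletal path. -/
theorem unique_skeletal_shift (a b k : ℕ) (ha : 0 < a) (hb : 0 < b)
    (hab : a.Coprime b) (hk : k < b) :
    ∀ P : List Bool, IsPath a b P →
      ∃! Q : List Bool, (∃ m ≤ P.length, Q = P.rotate m) ∧ SkeletalPath a b k Q :=
  unique_skeletal_shift_general a b k hb hab
end

section
/- Let a, b be coprime positive integers and fix k with 0 ≤ k < b. The number of k-skeletal paths in P(N^b E^a) equals the rational Catalan number Cat(a,b) = (a+b)!/(a!·b!·(a+b)). -/
open List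

lemma ncard_length_count_true_zero (n : ℕ) :
    {l : List Bool | l.length = n ∧ l.count true = 0}.ncard = 1 := by
  convert Set.ncard_singleton (replicate n false)
  ext l
  simp only [Set.mem_ofPred_eq, Set.mem_singleton_iff, count_eq_zero, eq_replicate_iff]
  constructor
  · rintro ⟨hl, h⟩
    exact ⟨hl, fun x hx => by simpa using ne_of_mem_of_not_mem hx h⟩
  · rintro ⟨hl, h⟩
    exact ⟨hl, fun hx => absurd (h true hx) (by decide)⟩

lemma ncard_length_count_true (n c : ℕ) :
    {l : List Bool | l.length = n ∧ l.count true = c}.ncard = n.choose c := by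
  induction n generalizing c with
  | zero =>
    cases c with
    | zero => exact ncard_length_count_true_zero 0
    | succ c =>
      rw [Nat.choose_zero_succ]
      convert Set.ncard_empty (List Bool)
      ext l
      simp only [Set.mem_ofPred_eq, length_eq_zero_iff, Set.mem_empty_iff_false, iff_false]
      rintro ⟨rfl, h⟩
      simp at h
  | succ n ih =>
    cases c with
    | zero => exact ncard_length_count_true_zero (n + 1)
    | succ c =>
      have hsplit : {l : List Bool | l.length = n + 1 ∧ l.count true = c + 1} =
          cons true '' {l | l.length = n ∧ l.count true = c} ∪
            cons false '' {l | l.length = n ∧ l.count true = c + 1} := by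
        ext (_ | ⟨x, l⟩)
        · simp
        · cases x <;> simp
      have hfin : ∀ c, {l : List Bool | l.length = n ∧ l.count true = c}.Finite := fun c =>
        (finite_length_eq Bool n).subset fun _ hl => hl.1
      have hdisj : Disjoint (cons true '' {l : List Bool | l.length = n ∧ l.count true = c})
          (cons false '' {l | l.length = n ∧ l.count true = c + 1}) :=
        Set.disjoint_left.2 fun _ ⟨_, _, h⟩ ⟨_, _, h'⟩ => by simp [← h] at h'
      rw [hsplit, Set.ncard_union_eq hdisj ((hfin c).image _) ((hfin (c + 1)).image _),
        Set.ncard_image_of_injective _ cons_injective,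
        Set.ncard_image_of_injective _ cons_injective, ih, ih, Nat.choose_succ_succ]

theorem ncard_eq_ncard_mul_of_existsUnique_rotate {α : Type*} (P p : List α → Prop) (n : ℕ)
    (hlen : ∀ W, P W → W.length = n) (hrot : ∀ W, P W → ∀ m, P (W.rotate m))
    (huniq : ∀ W, P W → ∃! s, s < n ∧ p (W.rotate s)) :
    {W | P W}.ncard = {W | P W ∧ p W}.ncard * n := by
  let rot : {W | P W ∧ p W} × Fin n → {W | P W} :=
    fun x => ⟨x.1.1.rotate x.2, hrot _ x.1.2.1 _⟩
  have hrot_inj : Function.Injective rot := by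
    suffices ∀ Q Q' : {W | P W ∧ p W}, ∀ m m' : Fin n, m ≤ m' →
        Q.1.rotate m = Q'.1.rotate m' → Q = Q' ∧ m = m' by
      rintro ⟨Q, m⟩ ⟨Q', m'⟩ h
      have h : Q.1.rotate m = Q'.1.rotate m' := congrArg Subtype.val h
      rcases le_total m m' with hm | hm
      · obtain ⟨rfl, rfl⟩ := this Q Q' m m' hm h
        rfl
      · obtain ⟨rfl, rfl⟩ := this Q' Q m' m hm h.symm
        rfl
    rintro ⟨Q, hQ⟩ ⟨Q', hQ'⟩ m m' hm h
    have hQ_eq : Q = Q'.rotate (m' - m) := by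
      rwa [← Nat.sub_add_cancel (show (m : ℕ) ≤ m' from hm), ← rotate_rotate,
        rotate_eq_rotate] at h
    have hzero : (m' : ℕ) - m = 0 :=
      (huniq Q' hQ'.1).unique ⟨by omega, hQ_eq ▸ hQ.2⟩ ⟨by omega, by simpa using hQ'.2⟩
    exact ⟨Subtype.ext (hQ_eq.trans (by rw [hzero, rotate_zero])), Fin.ext (by omega)⟩
  have hrot_surj : Function.Surjective rot := by
    rintro ⟨W, hW⟩
    obtain ⟨s, ⟨hs, hps⟩, -⟩ := huniq W hW
    have hlen' : (W.rotate s).length = n := by rw [length_rotate, hlen W hW]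
    refine ⟨⟨⟨W.rotate s, hrot W hW s, hps⟩, ⟨(n - s % n) % n, Nat.mod_lt _ (by omega)⟩⟩, ?_⟩
    apply Subtype.ext
    simp only [rot]
    rw [← hlen', rotate_mod, eq_comm, ← rotate_eq_iff]
  rw [← Nat.card_coe_set_eq, ← Nat.card_coe_set_eq,
    ← Nat.card_eq_of_bijective rot ⟨hrot_inj, hrot_surj⟩, Nat.card_prod, Nat.card_fin]

lemma Nat.Coprime.add_pos {a b : ℕ} (hab : a.Coprime b) : 0 < a + b :=
  Nat.pos_of_ne_zero fun h0 => Nat.not_coprime_zero_zero <| by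
    rwa [Nat.eq_zero_of_add_eq_zero_left h0, Nat.eq_zero_of_add_eq_zero_right h0] at hab

def wordLevel (a b : ℕ) (l : List Bool) : ℤ :=
  a * l.count true - b * l.count false

section Level

variable {a b k : ℕ} {Q : List Bool}

lemma lvlAt_eq_wordLevel_take (Q : List Bool) (m : ℕ) :
    lvlAt a b Q m = wordLevel a b (Q.take m) := rfl

lemma wordLevel_append (l l' : List Bool) :
    wordLevel a b (l ++ l') = wordLevel a b l + wordLevel a b l' := by
  simp only [wordLevel, count_append]
  push_cast
  ring

lemma IsPath.wordLevel_eq_zero (h : IsPath a b Q) : wordLevel a b Q = 0 := by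
  rw [wordLevel, h.1, h.2]
  ring

lemma IsPath.length_eq_s7 (h : IsPath a b Q) : Q.length = a + b := by
  rw [← h.1, ← h.2, count_false_add_count_true]

lemma IsPath.rotate (h : IsPath a b Q) (s : ℕ) : IsPath a b (Q.rotate s) := by
  simpa only [IsPath, (Q.rotate_perm s).count_eq] using h

lemma ncard_isPath (a b : ℕ) : {Q | IsPath a b Q}.ncard = (a + b).choose b := by
  rw [← ncard_length_count_true]
  congr 1
  ext Q
  refine ⟨fun h => ⟨h.length_eq_s7, h.1⟩, fun ⟨hlen, htrue⟩ => ⟨htrue, ?_⟩⟩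
  have := count_true_add_count_false Q
  omega

lemma IsPath.lvlAt_rotate_s7 (h : IsPath a b Q) {s m : ℕ} (hs : s < a + b) (hm : m ≤ a + b) :
    lvlAt a b (Q.rotate s) m = lvlAt a b Q ((s + m) % (a + b)) - lvlAt a b Q s := by
  have hQ := h.length_eq_s7
  simp only [lvlAt_eq_wordLevel_take]
  rw [rotate_eq_drop_append_take (by omega), take_append, length_drop, hQ]
  rcases lt_or_ge (s + m) (a + b) with hsm | hsm
  · rw [Nat.mod_eq_of_lt hsm, Nat.sub_eq_zero_of_le (by omega), take_zero, append_nil,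
      take_add, wordLevel_append]
    ring
  · have hdrop : wordLevel a b (Q.drop s) = -wordLevel a b (Q.take s) := by
      rw [eq_neg_iff_add_eq_zero, add_comm, ← wordLevel_append, take_append_drop,
        h.wordLevel_eq_zero]
    have hmod : (s + m) % (a + b) = m - (a + b - s) := by
      rw [Nat.mod_eq_sub_mod hsm, Nat.mod_eq_of_lt (by omega)]
      omega
    rw [take_of_length_le (by rw [length_drop]; omega), take_take, min_eq_left (by omega),
      wordLevel_append, hdrop, hmod]
    ring

lemma IsPath.lvlAt_add_mul_count_false (h : IsPath a b Q) {m : ℕ} (hm : m ≤ a + b) :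
    lvlAt a b Q m + (a + b) * (Q.take m).count false = a * m := by
  have hcount := count_true_add_count_false (Q.take m)
  rw [length_take, h.length_eq_s7, min_eq_left hm] at hcount
  have hcount' : ((Q.take m).count true : ℤ) + (Q.take m).count false = m := by
    exact_mod_cast hcount
  rw [lvlAt]
  linear_combination (a : ℤ) * hcount'

lemma IsPath.lvlAt_injOn_s7 (hab : a.Coprime b) (h : IsPath a b Q) :
    Set.InjOn (lvlAt a b Q) (Set.Iio (a + b)) := by
  intro m (hm : m < a + b) m' (hm' : m' < a + b) heq
  have hcop : Nat.gcd (a + b) a = 1 := by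
    rw [add_comm]
    exact Nat.coprime_add_self_left.2 hab.symm
  have hmod : a * m ≡ a * m' [MOD a + b] := by
    rw [← Int.natCast_modEq_iff, Int.modEq_iff_dvd]
    refine ⟨(Q.take m').count false - (Q.take m).count false, ?_⟩
    push_cast
    linear_combination h.lvlAt_add_mul_count_false hm.le -
      h.lvlAt_add_mul_count_false hm'.le - heq
  exact (hmod.cancel_left_of_coprime hcop).eq_of_lt_of_lt hm hm'

lemma IsDyck.r1 (h : IsDyck a b Q) (k : ℕ) : R1 a b k Q :=
  fun m hm hN _ => h m hm hN

lemma IsPath.isDyck_rotate_of_isMinOn (h : IsPath a b Q) {s : ℕ} (hs : s < a + b)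
    (hmin : IsMinOn (lvlAt a b Q) (Set.Iio (a + b)) s) : IsDyck a b (Q.rotate s) := by
  intro m hm _
  rw [length_rotate, h.length_eq_s7] at hm
  rw [h.lvlAt_rotate_s7 hs hm.le, sub_nonneg]
  exact isMinOn_iff.1 hmin _ (Nat.mod_lt _ (by omega))

lemma exists_add_mod_eq {n s p : ℕ} (hs : s < n) (hp : p < n) : ∃ m ≤ n, (s + m) % n = p :=
  ⟨(n - s + p) % n, (Nat.mod_lt _ (by omega)).le, by
    rw [Nat.add_mod_mod, ← Nat.add_assoc, Nat.add_sub_cancel' hs.le, Nat.add_mod_left,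
      Nat.mod_eq_of_lt hp]⟩

lemma IsPath.skeletalPath_rotate_iff_s7 (h : IsPath a b Q) {s : ℕ} (hs : s < a + b) :
    SkeletalPath a b k (Q.rotate s) ↔ R1 a b k (Q.rotate s) ∧
      IsMaxOn (lvlAt a b Q) {p | p < a + b ∧ R1 a b k (Q.rotate p)} s := by
  have hrot : ∀ m, (Q.rotate s).rotate m = Q.rotate ((s + m) % (a + b)) := fun m => by
    rw [rotate_rotate, ← h.length_eq_s7, rotate_mod]
  simp only [SkeletalPath, isMaxOn_iff, length_rotate, h.length_eq_s7, hrot]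
  refine and_congr_right fun _ => ⟨fun hR2 p ⟨hp, hR1⟩ => ?_, fun hmax m hm hpos hR1 => ?_⟩
  · obtain ⟨m, hm, rfl⟩ := exists_add_mod_eq hs hp
    by_contra! hlt
    exact hR2 m hm (by rw [h.lvlAt_rotate_s7 hs hm]; linarith) hR1
  · have := hmax _ ⟨Nat.mod_lt _ (by omega), hR1⟩
    rw [h.lvlAt_rotate_s7 hs hm] at hpos
    linarith

theorem IsPath.existsUnique_skeletalPath_rotate (hab : a.Coprime b) (h : IsPath a b Q) :
    ∃! s, s < a + b ∧ SkeletalPath a b k (Q.rotate s) := by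
  have hn := hab.add_pos
  obtain ⟨s₀, hs₀, hmin⟩ := Set.exists_min_image _ (lvlAt a b Q) (Set.finite_Iio _) ⟨0, hn⟩
  set R : Set ℕ := {p | p < a + b ∧ R1 a b k (Q.rotate p)}
  obtain ⟨s, ⟨hs, hR1⟩, hmax⟩ := Set.exists_max_image R (lvlAt a b Q)
    ((Set.finite_Iio _).subset fun _ hp => hp.1)
    ⟨s₀, hs₀, (h.isDyck_rotate_of_isMinOn hs₀ (isMinOn_iff.2 hmin)).r1 k⟩
  refine ⟨s, ⟨hs, (h.skeletalPath_rotate_iff_s7 hs).2 ⟨hR1, isMaxOn_iff.2 hmax⟩⟩, ?_⟩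
  rintro t ⟨ht, hskel⟩
  obtain ⟨htR1, htmax⟩ := (h.skeletalPath_rotate_iff_s7 ht).1 hskel
  exact h.lvlAt_injOn_s7 hab ht hs
    (le_antisymm (hmax t ⟨ht, htR1⟩) (isMaxOn_iff.1 htmax s ⟨hs, hR1⟩))

end Level

theorem skeletal_count_general (a b k : ℕ) (hab : a.Coprime b) :
    {Q : List Bool | IsPath a b Q ∧ SkeletalPath a b k Q}.ncard =
      (a + b).factorial / (a.factorial * b.factorial * (a + b)) := by
  have hrotations := ncard_eq_ncard_mul_of_existsUnique_rotate (IsPath a b)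
    (SkeletalPath a b k) (a + b) (fun _ h => h.length_eq_s7) (fun _ h => h.rotate)
    (fun _ h => h.existsUnique_skeletalPath_rotate hab)
  rw [ncard_isPath] at hrotations
  refine (Nat.div_eq_of_eq_mul_left ?_ ?_).symm
  · have := hab.add_pos
    positivity
  · rw [← Nat.choose_mul_factorial_mul_factorial (Nat.le_add_left b a), Nat.add_sub_cancel,
      hrotations]
    ring

/-- the number of `k`-skeletal paths in `P(N^b E^a)` is the
rational Catalan number `Cat(a,b)`. -/
theorem skeletal_count (a b k : ℕ) (ha : 0 < a) (hb : 0 < b)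
    (hab : a.Coprime b) (hk : k < b) :
    {Q : List Bool | IsPath a b Q ∧ SkeletalPath a b k Q}.ncard =
      (a + b).factorial / (a.factorial * b.factorial * (a + b)) :=
  skeletal_count_general a b k hab
end

section
/- Let a, b be coprime positive integers and fix k with 0 ≤ k < b. Let D be a k-stable chip configuration with labeled path Q = lpath(D). Then D is not k-skeletal if and only if there exists s ∈ {1,…,b} such that Q arrives at the min-level point v_s by an east step, the borrow move β_S is legal on D, and β_S(D) is k-stable, where S is the set of the s poorest vertices in D. -/
/-- A labeled path: `none` = east step, `some i` = north step labeled `i`.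
It has `a` east steps, each label `1,…,b` exactly once, and labels increase
along each run of consecutive north steps. -/
def IsLabeled (a b : ℕ) (L : List (Option (Fin b))) : Prop :=
  L.count none = a ∧ (∀ i : Fin b, L.count (some i) = 1) ∧
  ∀ m : ℕ, ∀ i j : Fin b, L.getD m none = some i → L.getD (m + 1) none = some j → i < j

/-- The underlying unlabeled path of a labeled path. -/
def unlabel {b : ℕ} (L : List (Option (Fin b))) : List Bool :=
  L.map Option.isSome

/-- The cluster-fire move `φ_S` for the quantized rational model on the
complete graph (`c = 1`): each `i ∈ S` loses `1 + ⌊(b−s)·a/b⌋` chips and each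
`j ∉ S` gains `⌊s·a/b⌋` chips, where `s = |S|`. -/
def cfire (a b : ℕ) (S : Finset (Fin b)) (D : Fin b → ℤ) : Fin b → ℤ :=
  fun i =>
    if i ∈ S then D i - 1 - (((b - S.card) * a / b : ℕ) : ℤ)
    else D i + ((S.card * a / b : ℕ) : ℤ)

/-- The borrow move `β_S = φ_S⁻¹`. -/
def cborrow (a b : ℕ) (S : Finset (Fin b)) (D : Fin b → ℤ) : Fin b → ℤ :=
  fun i =>
    if i ∈ S then D i + 1 + (((b - S.card) * a / b : ℕ) : ℤ)
    else D i - ((S.card * a / b : ℕ) : ℤ)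

/-- `D` is `k`-stable: `D ≥ 0` and no `k`-firing move `φ_S` (with
`0 < |S| ≤ k+1`) is legal on `D`. -/
def KStable (a b k : ℕ) (D : Fin b → ℤ) : Prop :=
  (∀ i, 0 ≤ D i) ∧ ∀ S : Finset (Fin b), S.Nonempty → S.card ≤ k + 1 →
    ¬ (∀ i, 0 ≤ cfire a b S D i)

/-- `D` is `k`-skeletal: `D` is `k`-stable and no legal nonempty borrow move
produces a `k`-stable configuration. -/
def KSkeletal (a b k : ℕ) (D : Fin b → ℤ) : Prop :=
  KStable a b k D ∧ ∀ T : Finset (Fin b), T.Nonempty →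
    (∀ i, 0 ≤ cborrow a b T D i) → ¬ KStable a b k (cborrow a b T D)

/-- `i` is poorer than `j` in configuration `D`. -/
def Poorer {b : ℕ} (D : Fin b → ℤ) (i j : Fin b) : Prop :=
  D i < D j ∨ (D i = D j ∧ i < j)

/-- `L` is the labeled path `lpath D`: a valid labeled path in which the north
step labeled `i` lies in column `D i`, i.e. is preceded by exactly `D i` east
steps.  (These conditions determine `L` uniquely.) -/
def IsLpath (a b : ℕ) (D : Fin b → ℤ) (L : List (Option (Fin b))) : Prop :=
  IsLabeled a b L ∧
  ∀ m : ℕ, ∀ i : Fin b, L.getD m none = some i → ((L.take m).count none : ℤ) = D i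

/-- The min-level points: `v_s = (⌊s·a/b⌋, s)` for `1 ≤ s ≤ b−1` and
`v_b = (a−1, b)`. -/
def minLvlPt (a b s : ℕ) : ℕ × ℕ :=
  if s = b then (a - 1, b) else (s * a / b, s)

/-- The path `Q` arrives at the min-level point `v_s` by an east step, the
point `v_s` being reached after the first `m` steps of `Q`. -/
def ArrivesByEast (a b : ℕ) (Q : List Bool) (s m : ℕ) : Prop :=
  0 < m ∧ m ≤ Q.length ∧ Q.getD (m - 1) true = false ∧
    ((Q.take m).count false, (Q.take m).count true) = minLvlPt a b s

/-! If a nonempty legal borrow `β_T D` is `k`-stable, then firing any single vertex of `T`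
from `β_T D` is illegal, while legality of the borrow bounds `D` from below off `T`. With
`s = |T|` and `v_s = (u, s)` the two bounds say exactly that `T = {i | D i < u}`, so `T` is
the set of the `s` poorest vertices. In `lpath D` the north steps taken before the east count
reaches `u` are then exactly those labelled by `T`: the path passes through `(u, s) = v_s`,
arriving by the east step that brings the east count to `u`. The converse is the definition
of `k`-skeletal. -/

open Finset

namespace List

theorem count_take_le_count_take {α : Type*} [BEq α] {l : List α} {x : α} {p q : ℕ}
    (h : p ≤ q) : (l.take p).count x ≤ (l.take q).count x :=
  (take_sublist_take_left h).count_le x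

theorem exists_take_count_eq_of_le_count {α : Type*} [BEq α] [LawfulBEq α] {l : List α}
    {x : α} {u : ℕ} (hu : 0 < u) (h : u ≤ l.count x) :
    ∃ m, 0 < m ∧ m ≤ l.length ∧ l[m - 1]? = some x ∧ (l.take m).count x = u ∧
      ∀ p, (l.take p).count x < u ↔ p < m := by
  classical
  have hex : ∃ m, u ≤ (l.take m).count x := ⟨l.length, by rwa [take_length]⟩
  set m := Nat.find hex
  have hlt : ∀ p, (l.take p).count x < u ↔ p < m := fun p =>
    ⟨fun hp => not_le.1 fun hmp => hp.not_ge ((Nat.find_spec hex).trans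
      (count_take_le_count_take hmp)), fun hp => not_le.1 (Nat.find_min hex hp)⟩
  obtain ⟨n, hn⟩ : ∃ n, m = n + 1 :=
    Nat.exists_eq_add_one.2 ((hlt 0).1 (by simpa using hu))
  have hprev := (hlt n).2 (by omega)
  have hcur : u ≤ (l.take (n + 1)).count x := hn ▸ Nat.find_spec hex
  rw [take_add_one] at hcur
  obtain ⟨hxn, hcount⟩ : l[n]? = some x ∧ (l.take n).count x + 1 = u := by
    rcases hx : l[n]? with _ | y
    · simp only [hx, Option.toList_none, append_nil] at hcur; omega
    · simp only [hx, Option.toList_some, count_append, count_singleton] at hcur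
      split_ifs at hcur with hyx
      · exact ⟨by simp_all, by omega⟩
      · omega
  refine ⟨m, by omega, Nat.find_min' hex (by rwa [take_length]), by simpa [hn] using hxn,
    ?_, hlt⟩
  rw [hn, take_add_one, count_append, hxn]
  simpa using hcount

theorem countP_isSome_eq_card {β : Type*} [Fintype β] [DecidableEq β] {l : List (Option β)}
    (h : ∀ i, l.count (some i) ≤ 1) : l.countP Option.isSome = #{i | some i ∈ l} := by
  have hnodup : l.reduceOption.Nodup := by
    rw [nodup_iff_count_le_one]
    intro i
    simpa [reduceOption, count_filterMap, ← count.eq_1] using h i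
  rw [countP_eq_length_filter, ← reduceOption_length_eq, ← toFinset_card_of_nodup hnodup]
  congr 1
  ext i
  simp [reduceOption_mem_iff]

end List

theorem unlabel_take {b : ℕ} (l : List (Option (Fin b))) (m : ℕ) :
    (unlabel l).take m = unlabel (l.take m) :=
  (List.map_take ..).symm

theorem count_false_unlabel {b : ℕ} (l : List (Option (Fin b))) :
    (unlabel l).count false = l.count none := by
  simp only [unlabel, List.count, List.countP_map]
  congr
  ext o
  cases o <;> simp

theorem count_true_unlabel {b : ℕ} (l : List (Option (Fin b))) :
    (unlabel l).count true = l.countP Option.isSome := by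
  simp only [unlabel, List.count, List.countP_map]
  congr
  ext o
  cases o <;> simp

theorem IsLpath.exists_arrives_by_east {a b : ℕ} {D : Fin b → ℤ} {L : List (Option (Fin b))}
    (hL : IsLpath a b D L) {T : Finset (Fin b)} {u : ℕ} (hu : 0 < u) (hua : u ≤ a)
    (hT : ∀ i, i ∈ T ↔ D i < u) :
    ∃ m, 0 < m ∧ m ≤ (unlabel L).length ∧ (unlabel L).getD (m - 1) true = false ∧
      ((unlabel L).take m).count false = u ∧ ((unlabel L).take m).count true = T.card := by
  obtain ⟨⟨hnone, hsome, -⟩, hcol⟩ := hL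
  obtain ⟨m, hm0, hmlen, hlast, hcount, hlt⟩ :=
    List.exists_take_count_eq_of_le_count hu (by rwa [count_false_unlabel, hnone])
  have hcolumn : ∀ p i, L[p]? = some (some i) →
      (((unlabel L).take p).count false : ℤ) = D i := fun p i hp => by
    rw [unlabel_take, count_false_unlabel]
    exact hcol p i (by simp [List.getD_eq_getElem?_getD, hp])
  have hmem : ∀ i, some i ∈ L.take m ↔ i ∈ T := by
    intro i
    simp only [hT, List.mem_iff_getElem?, List.getElem?_take]
    constructor
    · rintro ⟨p, hp⟩
      split_ifs at hp with hpm
      · rw [← hcolumn p i hp]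
        exact_mod_cast (hlt p).2 hpm
    · intro hi
      obtain ⟨p, hp⟩ := List.mem_iff_getElem?.1
        (List.count_pos_iff.1 (by rw [hsome i]; exact Nat.one_pos) : some i ∈ L)
      rw [← hcolumn p i hp] at hi
      exact ⟨p, by simp [(hlt p).1 (by exact_mod_cast hi), hp]⟩
  refine ⟨m, hm0, hmlen, by simp [List.getD_eq_getElem?_getD, hlast], hcount, ?_⟩
  rw [unlabel_take, count_true_unlabel, List.countP_isSome_eq_card
    fun i => ((L.take_sublist m).count_le _).trans (hsome i).le]
  congr 1
  ext i
  simp [hmem]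

theorem minLvlPt_snd (a b s : ℕ) : (minLvlPt a b s).2 = s := by
  unfold minLvlPt
  split_ifs with h
  · exact h.symm
  · rfl

theorem minLvlPt_fst_le {a b s : ℕ} (hs : s ≤ b) : (minLvlPt a b s).1 ≤ a := by
  unfold minLvlPt
  split_ifs
  · exact Nat.sub_le a 1
  · exact Nat.div_le_of_le_mul (Nat.mul_le_mul_right a hs)

theorem sub_one_mul_div_le_add_minLvlPt_fst {a b s : ℕ} (hs : 0 < s) (hsb : s ≤ b) :
    (b - 1) * a / b ≤ (b - s) * a / b + (minLvlPt a b s).1 := by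
  have hb : 0 < b := hs.trans_le hsb
  have hdiv : (b - 1) * a / b ≤ a - 1 := by
    rcases Nat.eq_zero_or_pos a with rfl | ha
    · simp
    · have : (b - 1) * a / b < a := (Nat.div_lt_iff_lt_mul hb).2 <|
        by rw [mul_comm a]; exact Nat.mul_lt_mul_of_pos_right (by omega) ha
      omega
  unfold minLvlPt
  split_ifs with h
  · simpa [h] using hdiv
  · -- `⌊(b-s)a/b⌋ + ⌊sa/b⌋ ≥ ⌊ba/b⌋ - 1 = a - 1`
    have := Nat.add_div_le_div_add_div_add_one ((b - s) * a) (s * a) b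
    rw [← add_mul, Nat.sub_add_cancel hsb, Nat.mul_div_cancel_left a hb] at this
    dsimp only
    generalize (b - s) * a / b = x, s * a / b = y at this ⊢
    omega

section Borrow

variable {a b k : ℕ} {T : Finset (Fin b)} {D : Fin b → ℤ}

theorem lt_minLvlPt_fst_of_mem (hstab : KStable a b k (cborrow a b T D)) {i : Fin b}
    (hi : i ∈ T) : D i < (minLvlPt a b T.card).1 := by
  have hs : 0 < T.card := Finset.card_pos.2 ⟨i, hi⟩
  have hsb : T.card ≤ b := (Finset.card_le_univ T).trans_eq (Fintype.card_fin b)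
  have key : (((b - 1) * a / b : ℕ) : ℤ) ≤ (((b - T.card) * a / b : ℕ) : ℤ) +
      (minLvlPt a b T.card).1 := by
    exact_mod_cast sub_one_mul_div_le_add_minLvlPt_fst hs hsb
  by_contra hle
  refine hstab.2 {i} (Finset.singleton_nonempty i) (by simp) fun j => ?_
  by_cases hji : j = i
  · subst hji
    simp only [cfire, cborrow, Finset.mem_singleton_self, if_true, hi, Finset.card_singleton]
    omega
  · simp only [cfire, Finset.mem_singleton, hji, if_false]
    exact add_nonneg (hstab.1 j) (Int.natCast_nonneg _)

theorem minLvlPt_fst_le_of_notMem (hleg : ∀ j, 0 ≤ cborrow a b T D j) {j : Fin b}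
    (hj : j ∉ T) : (minLvlPt a b T.card).1 ≤ D j := by
  have hs : T.card ≠ b := fun h =>
    hj (Finset.eq_univ_of_card T (h.trans (Fintype.card_fin b).symm) ▸ Finset.mem_univ j)
  have := hleg j
  simp only [cborrow, hj, if_false] at this
  simp only [minLvlPt, hs, if_false]
  omega

theorem mem_iff_lt_minLvlPt_fst (hleg : ∀ j, 0 ≤ cborrow a b T D j)
    (hstab : KStable a b k (cborrow a b T D)) (i : Fin b) :
    i ∈ T ↔ D i < (minLvlPt a b T.card).1 :=
  ⟨lt_minLvlPt_fst_of_mem hstab, fun hlt => by_contra fun hi =>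
    (minLvlPt_fst_le_of_notMem hleg hi).not_gt hlt⟩

end Borrow

theorem not_kSkeletal_iff_general (a b k : ℕ) (D : Fin b → ℤ) (hst : KStable a b k D)
    (L : List (Option (Fin b))) (hL : IsLpath a b D L) :
    ¬ KSkeletal a b k D ↔
      ∃ s m : ℕ, 1 ≤ s ∧ s ≤ b ∧ ArrivesByEast a b (unlabel L) s m ∧
        ∃ S : Finset (Fin b), S.card = s ∧ (∀ i ∈ S, ∀ j ∉ S, Poorer D i j) ∧
          (∀ i, 0 ≤ cborrow a b S D i) ∧ KStable a b k (cborrow a b S D) := by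
  constructor
  · intro hns
    obtain ⟨T, ⟨i, hi⟩, hleg, hstab⟩ : ∃ T : Finset (Fin b), T.Nonempty ∧
        (∀ i, 0 ≤ cborrow a b T D i) ∧ KStable a b k (cborrow a b T D) := by
      simpa [KSkeletal, hst] using hns
    have hT := mem_iff_lt_minLvlPt_fst hleg hstab
    have hsb : T.card ≤ b := (Finset.card_le_univ T).trans_eq (Fintype.card_fin b)
    obtain ⟨m, hm0, hmlen, heast, hfalse, htrue⟩ := hL.exists_arrives_by_east
      (by exact_mod_cast (hst.1 i).trans_lt ((hT i).1 hi)) (minLvlPt_fst_le hsb) hT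
    refine ⟨T.card, m, Finset.card_pos.2 ⟨i, hi⟩, hsb, ⟨hm0, hmlen, heast, ?_⟩, T, rfl,
      fun i hi j hj => Or.inl (((hT i).1 hi).trans_le (not_lt.1 ((hT j).not.1 hj))),
      hleg, hstab⟩
    exact Prod.ext hfalse (htrue.trans (minLvlPt_snd a b T.card).symm)
  · rintro ⟨s, m, hs, -, -, S, rfl, -, hleg, hstab⟩ ⟨-, hskel⟩
    exact hskel S (Finset.card_pos.1 hs) hleg hstab

/-- a `k`-stable configuration `D` with `Q = lpath D` fails to be
`k`-skeletal iff for some `s`, `Q` arrives at `v_s` by an east step and the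
borrow move at the set `S` of the `s` poorest vertices is legal with `β_S D`
`k`-stable. -/
theorem not_kSkeletal_iff (a b k : ℕ) (ha : 0 < a) (hb : 0 < b)
    (hab : a.Coprime b) (hk : k < b) (D : Fin b → ℤ) (hst : KStable a b k D)
    (L : List (Option (Fin b))) (hL : IsLpath a b D L) :
    ¬ KSkeletal a b k D ↔
      ∃ s m : ℕ, 1 ≤ s ∧ s ≤ b ∧ ArrivesByEast a b (unlabel L) s m ∧
        ∃ S : Finset (Fin b), S.card = s ∧ (∀ i ∈ S, ∀ j ∉ S, Poorer D i j) ∧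
          (∀ i, 0 ≤ cborrow a b S D i) ∧ KStable a b k (cborrow a b S D) :=
  not_kSkeletal_iff_general a b k D hst L hL
end
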